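/- (Heine formula) In the power series ring Q(v)⟦x⟧ with the λ-ring structure determined by ψ_n(v) = v^n and ψ_n(x) = x^n, one has Exp(x/(1-v)) = Σ_{m≥0} x^m / Π_{i=1}^m (1-v^i). -/

import Mathlib

/-!
Statement 2 (Heine formula): in `ℚ(v)⟦x⟧` with the λ-ring structure determined by
`ψ_n(v) = v^n`, `ψ_n(x) = x^n`, one has
`Exp (x/(1-v)) = Σ_{m≥0} x^m / Π_{i=1}^m (1 - v^i)`.
Power series over `ℚ(v)` are topologized coefficientwise (product of discrete
topologies) and `Exp f = exp (Σ_{k≥1} ψ_k f / k)` via `tsum`.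
-/

open PowerSeries

noncomputable instance : TopologicalSpace (PowerSeries (RatFunc ℚ)) :=
  @Pi.topologicalSpace (Unit →₀ ℕ) (fun _ => RatFunc ℚ) fun _ => ⊥

/-- `exp` via its power series. -/
noncomputable def expQ (f : PowerSeries (RatFunc ℚ)) : PowerSeries (RatFunc ℚ) :=
  ∑' n : ℕ, ((n.factorial : ℚ)⁻¹) • f ^ n

/-- `Exp f = exp (Σ_{k≥1} ψ_k f / k)`. -/
noncomputable def ExpQ (ψ : ℕ → PowerSeries (RatFunc ℚ) → PowerSeries (RatFunc ℚ))
    (f : PowerSeries (RatFunc ℚ)) : PowerSeries (RatFunc ℚ) :=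
  expQ (∑' k : ℕ, (((k : ℚ) + 1)⁻¹) • ψ (k + 1) f)

/-
Since `ψ_k` raises `v` and `x` to the `k`-th power, `Σ_k ψ_k (x / (1 - v)) / k` is
`L = Σ_{n ≥ 1} x^n / (n (1 - v^n))`, and `Exp (x / (1 - v)) = exp L` is the unique power series
`E` with `E(0) = 1` and `E' = L' E` (for another solution `B`, `(B / E)' = 0`). The Heine series
`B = Σ_m x^m / (v; v)_m`, where `(v; v)_m = Π_{i=1}^m (1 - v^i)`, solves the same equation: on
coefficients this is `Σ_{i + j = n} 1 / ((1 - v^(i+1)) (v; v)_j) = (n + 1) / (v; v)_(n+1)`,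
which follows by induction on `n` from the partial fraction decomposition
`1 / ((1 - a) (1 - b)) = (1 / (1 - a) + 1 / (1 - b) - 1) / (1 - a b)` with `a b = v^(n+2)`.
-/

open Finset

section InvQPochhammer

variable {K : Type*} [Field K]

theorem inv_one_sub_mul_inv_one_sub {a b : K} (ha : 1 - a ≠ 0) (hb : 1 - b ≠ 0)
    (hab : 1 - a * b ≠ 0) :
    (1 - a)⁻¹ * (1 - b)⁻¹ = ((1 - a)⁻¹ + (1 - b)⁻¹ - 1) * (1 - a * b)⁻¹ := by
  field_simp
  ring

def invQPochhammer (v : K) (m : ℕ) : K :=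
  (∏ i ∈ range m, (1 - v ^ (i + 1)))⁻¹

variable (v : K)

@[simp]
theorem invQPochhammer_zero : invQPochhammer v 0 = 1 := by
  simp [invQPochhammer]

theorem invQPochhammer_succ (m : ℕ) :
    invQPochhammer v (m + 1) = invQPochhammer v m * (1 - v ^ (m + 1))⁻¹ := by
  simp [invQPochhammer, prod_range_succ, mul_comm]

theorem sum_antidiagonal_invQPochhammer_succ_sub (n : ℕ) :
    ∑ p ∈ antidiagonal n, (invQPochhammer v (p.2 + 1) - invQPochhammer v p.2) =
      invQPochhammer v (n + 1) - 1 := by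
  rw [← Nat.sum_antidiagonal_swap]
  exact (Nat.sum_antidiagonal_eq_sum_range_succ
    (fun i _ => invQPochhammer v (i + 1) - invQPochhammer v i) n).trans
    (by simp only [sum_range_sub, invQPochhammer_zero])

variable {v}

theorem sum_antidiagonal_inv_one_sub_pow_mul_invQPochhammer (hv : ∀ k ≠ 0, v ^ k ≠ 1) (n : ℕ) :
    ∑ p ∈ antidiagonal n, (1 - v ^ (p.1 + 1))⁻¹ * invQPochhammer v p.2 =
      (n + 1) * invQPochhammer v (n + 1) := by
  induction n with
  | zero => simp [invQPochhammer_succ]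
  | succ n ih =>
    have hne : ∀ k ≠ 0, 1 - v ^ k ≠ 0 := fun k hk => sub_ne_zero.2 (hv k hk).symm
    have hsplit : ∀ p ∈ antidiagonal n,
        (1 - v ^ (p.1 + 1))⁻¹ * invQPochhammer v (p.2 + 1) = (1 - v ^ (n + 2))⁻¹ *
          ((1 - v ^ (p.1 + 1))⁻¹ * invQPochhammer v p.2 +
            (invQPochhammer v (p.2 + 1) - invQPochhammer v p.2)) := by
      rintro ⟨i, j⟩ hij
      have hpow : v ^ (i + 1) * v ^ (j + 1) = v ^ (n + 2) := by
        rw [← pow_add, show i + 1 + (j + 1) = n + 2 by simp at hij; omega]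
      have hpf := inv_one_sub_mul_inv_one_sub (hne (i + 1) (by omega)) (hne (j + 1) (by omega))
        (hpow ▸ hne (n + 2) (by omega))
      rw [hpow] at hpf
      simp only [invQPochhammer_succ]
      linear_combination invQPochhammer v j * hpf
    rw [Nat.sum_antidiagonal_succ', sum_congr rfl hsplit, ← mul_sum, sum_add_distrib, ih,
      sum_antidiagonal_invQPochhammer_succ_sub, invQPochhammer_succ v (n + 1), invQPochhammer_zero]
    push_cast
    ring

end InvQPochhammer

section HeineSeries

variable {K : Type*} [Field K]

/-- The series `Σ_k ψ_k (x / (1 - v)) / k = Σ_n x^n / (n (1 - v^n))`; the junk value `0⁻¹ = 0`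
makes its constant coefficient vanish. -/
def heineLog (v : K) : K⟦X⟧ :=
  mk fun n => (n : K)⁻¹ * (1 - v ^ n)⁻¹

variable (v : K)

@[simp]
theorem constantCoeff_heineLog : constantCoeff (heineLog v) = 0 := by
  simp [heineLog, ← coeff_zero_eq_constantCoeff_apply]

theorem coeff_derivative_heineLog [CharZero K] (n : ℕ) :
    coeff n (d⁄dX K (heineLog v)) = (1 - v ^ (n + 1))⁻¹ := by
  rw [coeff_derivative, heineLog, coeff_mk]
  have : (n : K) + 1 ≠ 0 := n.cast_add_one_ne_zero
  push_cast
  field_simp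

variable {v}

theorem derivative_mk_invQPochhammer [CharZero K] (hv : ∀ k ≠ 0, v ^ k ≠ 1) :
    d⁄dX K (mk (invQPochhammer v)) = d⁄dX K (heineLog v) * mk (invQPochhammer v) := by
  ext n
  rw [coeff_derivative, coeff_mk, coeff_mul]
  simp only [coeff_derivative_heineLog, coeff_mk]
  rw [sum_antidiagonal_inv_one_sub_pow_mul_invQPochhammer hv, mul_comm]

end HeineSeries

section Exp

variable {K : Type*} [Field K] [CharZero K]

theorem constantCoeff_exp_subst {g : K⟦X⟧} (hg : constantCoeff g = 0) :
    constantCoeff ((exp K).subst g) = 1 := by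
  rw [← coeff_zero_eq_constantCoeff_apply, coeff_subst' (HasSubst.of_constantCoeff_zero' hg),
    finsum_eq_single _ 0 fun d hd => by simp [coeff_zero_eq_constantCoeff_apply, hg, zero_pow hd]]
  simp

theorem exp_subst_eq_of_derivative_eq_mul {g B : K⟦X⟧} (hg : constantCoeff g = 0)
    (hB : d⁄dX K B = d⁄dX K g * B) (hB₀ : constantCoeff B = 1) :
    (exp K).subst g = B := by
  set E := (exp K).subst g
  have hE : d⁄dX K E = d⁄dX K g * E := by
    rw [derivative_subst (HasSubst.of_constantCoeff_zero' hg), derivative_exp, mul_comm]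
  have hE₀ : constantCoeff E = 1 := constantCoeff_exp_subst hg
  have hEinv : E * E⁻¹ = 1 := PowerSeries.mul_inv_cancel E (by simp [hE₀])
  have hquot : B * E⁻¹ = 1 := by
    refine derivative.ext ?_ (by simp [constantCoeff_inv, hB₀, hE₀])
    rw [Derivation.leibniz, derivative_inv', hB, hE, derivative_one, smul_eq_mul, smul_eq_mul]
    linear_combination -(d⁄dX K g * B * E⁻¹) * hEinv
  calc E = B * E⁻¹ * E := by rw [hquot, one_mul]
    _ = B := by rw [mul_assoc, PowerSeries.inv_mul_cancel E (by simp [hE₀]), mul_one]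

end Exp

section PiTopology

open PowerSeries.WithPiTopology

variable {R : Type*} [TopologicalSpace R]

theorem hasSum_C_mul_X_pow [Semiring R] (a : ℕ → R) : HasSum (fun n => C (a n) * X ^ n) (mk a) := by
  simpa [monomial_eq_C_mul_X_pow] using hasSum_of_monomials_self (mk a)

theorem hasSum_C_coeff_succ_mul_X_pow_succ [Semiring R] {g : R⟦X⟧} (hg : constantCoeff g = 0) :
    HasSum (fun n => C (coeff (n + 1) g) * X ^ (n + 1)) g := by
  have h := hasSum_of_monomials_self g
  rw [← Nat.succ_injective.hasSum_iff] at h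
  · simpa [Function.comp_def, monomial_eq_C_mul_X_pow] using h
  · intro n hn
    obtain rfl : n = 0 := by simpa [Nat.range_succ] using hn
    simp [hg]

theorem hasSum_coeff_smul_pow_subst [CommRing R] {g : R⟦X⟧} (hg : HasSubst g) (f : R⟦X⟧) :
    HasSum (fun d => coeff d f • g ^ d) (f.subst g) := by
  rw [hasSum_iff_hasSum_coeff]
  intro n
  have hfin := coeff_subst_finite' hg f n
  rw [coeff_subst' hg, finsum_eq_sum _ hfin]
  simpa only [coeff_smul] using hasSum_sum_of_ne_finset_zero (by simp)

theorem hasSum_inv_factorial_smul_pow_exp_subst {K : Type*} [Field K] [CharZero K]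
    [TopologicalSpace K] {g : K⟦X⟧} (hg : constantCoeff g = 0) :
    HasSum (fun n => (n.factorial : ℚ)⁻¹ • g ^ n) ((exp K).subst g) := by
  simpa only [coeff_exp, algebraMap_smul, one_div] using
    hasSum_coeff_smul_pow_subst (HasSubst.of_constantCoeff_zero' hg) (exp K)

end PiTopology

theorem RatFunc.X_pow_ne_one {K : Type*} [Field K] {k : ℕ} (hk : k ≠ 0) :
    (RatFunc.X : RatFunc K) ^ k ≠ 1 := by
  rw [← RatFunc.algebraMap_X, ← map_pow, ← map_one (algebraMap (Polynomial K) (RatFunc K)), Ne,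
    (RatFunc.algebraMap_injective K).eq_iff]
  intro h
  simpa [hk] using congrArg Polynomial.natDegree h

theorem stmt2
    (φ : ℕ → RatFunc ℚ →+* RatFunc ℚ)
    (hφ : ∀ n, 1 ≤ n → φ n (RatFunc.X) = RatFunc.X ^ n)
    (ψ : ℕ → PowerSeries (RatFunc ℚ) →+* PowerSeries (RatFunc ℚ))
    (hψ : ∀ n, 1 ≤ n → ∀ (a : RatFunc ℚ) (m : ℕ),
      ψ n (PowerSeries.C a * PowerSeries.X ^ m) =
        PowerSeries.C (φ n a) * PowerSeries.X ^ (n * m)) :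
    ExpQ (fun n => ψ n)
        (PowerSeries.C ((1 - RatFunc.X)⁻¹) * PowerSeries.X) =
      ∑' m : ℕ, PowerSeries.C
          (∏ i ∈ Finset.range m, (1 - RatFunc.X ^ (i + 1)))⁻¹ *
        PowerSeries.X ^ m := by
  -- the coefficientwise topology above is `WithPiTopology` for the discrete topology on `RatFunc ℚ`
  let _ : TopologicalSpace (RatFunc ℚ) := ⊥
  have : T2Space (RatFunc ℚ)⟦X⟧ :=
    @WithPiTopology.instT2Space _ ⊥ (@DiscreteTopology.toT2Space _ ⊥ ⟨rfl⟩)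
  set v : RatFunc ℚ := RatFunc.X
  have hψ_term (k : ℕ) : ((k : ℚ) + 1)⁻¹ • ψ (k + 1) (C (1 - v)⁻¹ * X) =
      C (coeff (k + 1) (heineLog v)) * X ^ (k + 1) := by
    have h := hψ (k + 1) k.succ_pos' (1 - v)⁻¹ 1
    rw [pow_one, mul_one] at h
    rw [h, map_inv₀, map_sub, map_one, hφ (k + 1) k.succ_pos', heineLog, coeff_mk,
      ← algebraMap_smul (RatFunc ℚ), smul_eq_C_mul, ← mul_assoc, ← map_mul, map_inv₀, map_add,
      map_one, map_natCast, Nat.cast_add_one]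
  have hlog : HasSum (fun k : ℕ => ((k : ℚ) + 1)⁻¹ • ψ (k + 1) (C (1 - v)⁻¹ * X))
      (heineLog v) := by
    simp only [hψ_term]
    exact hasSum_C_coeff_succ_mul_X_pow_succ (constantCoeff_heineLog v)
  have hexp : HasSum (fun n : ℕ => (n.factorial : ℚ)⁻¹ • heineLog v ^ n)
      ((exp (RatFunc ℚ)).subst (heineLog v)) :=
    hasSum_inv_factorial_smul_pow_exp_subst (constantCoeff_heineLog v)
  have hrhs : HasSum (fun m : ℕ => C (∏ i ∈ range m, (1 - v ^ (i + 1)))⁻¹ * X ^ m)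
      (mk (invQPochhammer v)) :=
    hasSum_C_mul_X_pow _
  rw [ExpQ, expQ, hlog.tsum_eq, hexp.tsum_eq, hrhs.tsum_eq]
  exact exp_subst_eq_of_derivative_eq_mul (constantCoeff_heineLog v)
    (derivative_mk_invQPochhammer fun _ => RatFunc.X_pow_ne_one) (by simp)
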